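/- Let G = {g_1,...,g_m} be a self-dual basis of F_{q^m} over F_q, and let C ⊆ F_{q^m}^m be the Gabidulin code generated by the k×m Moore matrix G_k with entries g_j^{q^{i-1}} (1 ≤ i ≤ k ≤ m). Then G_k G_k^T = I_k, and hence C is an LCD MRD code with parameters [m, k, m-k+1]. -/

import Mathlib

set_option linter.unusedSectionVars false
open Polynomial Finset

namespace MooreAux
variable (F K : Type*) [Field F] [Fintype F] [Field K] [Fintype K] [Algebra F K]

lemma add_pow_cardF (x y : K) (n : ℕ) :
    (x + y) ^ (Fintype.card F) ^ n = x ^ (Fintype.card F) ^ n + y ^ (Fintype.card F) ^ n := by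
  obtain ⟨p, hpc⟩ := CharP.exists F
  haveI : CharP F p := hpc
  haveI hp : Fact p.Prime := ⟨CharP.char_is_prime F p⟩
  haveI : CharP K p := charP_of_injective_algebraMap' F (A := K) p
  obtain ⟨s, -, hcard⟩ := FiniteField.card F p
  rw [hcard, ← pow_mul, add_pow_char_pow, pow_mul]

lemma smul_pow_cardF (a : F) (x : K) (n : ℕ) :
    (a • x) ^ (Fintype.card F) ^ n = a • x ^ (Fintype.card F) ^ n := by
  rw [Algebra.smul_def, Algebra.smul_def, mul_pow, ← map_pow, FiniteField.pow_card_pow]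

/-- The `F`-linear map `x ↦ ∑_{j<n} c j * x^(q^j)`. -/
noncomputable def Lmap (c : ℕ → K) (n : ℕ) : K →ₗ[F] K where
  toFun x := ∑ j ∈ range n, c j * x ^ (Fintype.card F) ^ j
  map_add' x y := by
    simp_rw [add_pow_cardF F K, mul_add, Finset.sum_add_distrib]
  map_smul' a x := by
    simp_rw [smul_pow_cardF F K, RingHom.id_apply, Finset.smul_sum, mul_smul_comm]

lemma Lmap_apply (c : ℕ → K) (n : ℕ) (x : K) :
    Lmap F K c n x = ∑ j ∈ range n, c j * x ^ (Fintype.card F) ^ j := rfl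


lemma card_le_natDegree {P : K[X]} (hP : P ≠ 0) (s : Finset K)
    (h : ∀ x ∈ s, P.IsRoot x) : s.card ≤ P.natDegree := by
  classical
  have h1 : s ⊆ P.roots.toFinset := fun x hx =>
    Multiset.mem_toFinset.mpr (Polynomial.mem_roots'.mpr ⟨hP, h x hx⟩)
  calc s.card ≤ P.roots.toFinset.card := Finset.card_le_card h1
    _ ≤ Multiset.card P.roots := Multiset.toFinset_card_le _
    _ ≤ P.natDegree := P.card_roots'

/-- The polynomial attached to `Lmap`. -/
noncomputable def Pc (c : ℕ → K) (n : ℕ) : K[X] :=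
  ∑ j ∈ range n, C (c j) * X ^ (Fintype.card F) ^ j

lemma Pc_eval (c : ℕ → K) (n : ℕ) (x : K) : (Pc F K c n).eval x = Lmap F K c n x := by
  simp [Pc, Lmap_apply, eval_finset_sum]

lemma Pc_coeff (c : ℕ → K) (n : ℕ) (i : ℕ) (hi : i < n) :
    (Pc F K c n).coeff ((Fintype.card F) ^ i) = c i := by
  have hq : 1 < Fintype.card F := Fintype.one_lt_card
  rw [Pc, finset_sum_coeff]
  rw [Finset.sum_eq_single i]
  · simp
  · intro j hj hji
    rw [coeff_C_mul, coeff_X_pow, if_neg, mul_zero]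
    exact fun he => hji (Nat.pow_right_injective hq he.symm)
  · intro hi'; exact absurd (Finset.mem_range.mpr hi) hi'

lemma finrank_ker_Lmap_le (c : ℕ → K) (n : ℕ) (j0 : ℕ) (hj0 : j0 < n) (hc : c j0 ≠ 0) :
    Module.finrank F (LinearMap.ker (Lmap F K c n)) ≤ n - 1 := by
  classical
  have hq : 1 < Fintype.card F := Fintype.one_lt_card
  set P := Pc F K c n with hPdef
  have hP : P ≠ 0 := by
    intro h
    exact hc (by rw [← Pc_coeff F K c n j0 hj0, ← hPdef, h, coeff_zero])
  have hdeg : P.natDegree ≤ (Fintype.card F) ^ (n - 1) := by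
    refine natDegree_sum_le_of_forall_le _ _ fun j hj => ?_
    refine le_trans (natDegree_C_mul_le _ _) ?_
    rw [natDegree_X_pow]
    exact Nat.pow_le_pow_right (lt_trans Nat.zero_lt_one hq)
      (by have := Finset.mem_range.mp hj; omega)
  haveI : Fintype ↥(LinearMap.ker (Lmap F K c n)) := Fintype.ofFinite _
  set s : Finset K :=
    Finset.univ.image (fun x : ↥(LinearMap.ker (Lmap F K c n)) => (x : K)) with hs
  have hcards : s.card = Fintype.card ↥(LinearMap.ker (Lmap F K c n)) := by
    rw [hs, Finset.card_image_of_injective _ Subtype.val_injective, Finset.card_univ]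
  have hroots : ∀ x ∈ s, P.IsRoot x := by
    intro x hx
    rw [hs, Finset.mem_image] at hx
    obtain ⟨y, -, rfl⟩ := hx
    have hy := y.2
    rw [LinearMap.mem_ker] at hy
    rw [Polynomial.IsRoot, Pc_eval, hy]
  have hcard := card_le_natDegree K hP s hroots
  rw [hcards, Module.card_eq_pow_finrank (K := F)] at hcard
  exact (Nat.pow_le_pow_iff_right hq).mp (le_trans hcard hdeg)

lemma exists_subspace_poly (t : ℕ) (v : Fin t → K) :
    ∃ c : ℕ → K, c t = 1 ∧ (∀ j, t < j → c j = 0) ∧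
      ∀ x ∈ Submodule.span F (Set.range v), Lmap F K c (t + 1) x = 0 := by
  induction t with
  | zero =>
    refine ⟨fun j => if j = 0 then 1 else 0, by simp, fun j hj => if_neg (by omega), ?_⟩
    · intro x hx
      have : Set.range v = ∅ := Set.range_eq_empty v
      rw [this, Submodule.span_empty, Submodule.mem_bot] at hx
      rw [hx, map_zero]
  | succ t ih =>
    obtain ⟨c', h1, h2, h3⟩ := ih (v ∘ Fin.castSucc)
    set q := Fintype.card F with hqdef
    set a := Lmap F K c' (t + 1) (v (Fin.last t)) with ha
    refine ⟨fun j => (if j = 0 then 0 else (c' (j - 1)) ^ q) - a ^ (q - 1) * c' j,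
      ?_, ?_, ?_⟩
    · simp only [Nat.succ_ne_zero, if_neg, Nat.add_sub_cancel, h1, one_pow,
        h2 (t + 1) (Nat.lt_succ_self t), mul_zero, sub_zero, if_false]
    · intro j hj
      have hj1 : t < j - 1 := by omega
      have hj0 : j ≠ 0 := by omega
      simp only [if_neg hj0, h2 (j - 1) hj1, h2 j (by omega), (zero_pow (Fintype.card_ne_zero : q ≠ 0) : (0 : K) ^ q = 0),
        mul_zero, sub_zero]
    · intro x hx
      -- key identity
      have key : ∀ y : K, Lmap F K
          (fun j => (if j = 0 then 0 else (c' (j - 1)) ^ q) - a ^ (q - 1) * c' j) (t + 2) y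
          = (Lmap F K c' (t + 1) y) ^ q - a ^ (q - 1) * Lmap F K c' (t + 1) y := by
        intro y
        rw [Lmap_apply]
        simp_rw [sub_mul, Finset.sum_sub_distrib]
        congr 1
        · -- frobenius of the sum
          have hfrob : (Lmap F K c' (t + 1) y) ^ q
              = ∑ j ∈ range (t + 1), (c' j) ^ q * y ^ q ^ (j + 1) := by
            rw [Lmap_apply]
            have := add_pow_cardF F K
            -- expand power of sum via induction packaged as map_sum of a ring hom
            let frobK : K →+* K :=
              { toFun := fun z => z ^ q,
                map_one' := one_pow q,
                map_mul' := fun z w => mul_pow z w q,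
                map_zero' := zero_pow Fintype.card_ne_zero,
                map_add' := fun z w => by simpa using add_pow_cardF F K z w 1 }
            have hfr : ∀ z : K, frobK z = z ^ q := fun _ => rfl
            rw [← hfr, map_sum]
            refine Finset.sum_congr rfl fun j hj => ?_
            rw [hfr, mul_pow, ← pow_mul, ← pow_succ]
          rw [hfrob, Finset.sum_range_succ']
          simp [Nat.succ_ne_zero]; rfl
        · rw [Lmap_apply, Finset.mul_sum, Finset.sum_range_succ,
            h2 (t + 1) (Nat.lt_succ_self t)]
          simp [mul_assoc]
      rw [key x]
      -- decompose x
      rw [Submodule.mem_span_range_iff_exists_fun] at hx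
      obtain ⟨sc, rfl⟩ := hx
      rw [Fin.sum_univ_castSucc]
      have hy : (∑ i : Fin t, sc i.castSucc • v i.castSucc) ∈
          Submodule.span F (Set.range (v ∘ Fin.castSucc)) := by
        refine Submodule.sum_mem _ fun i _ => Submodule.smul_mem _ _ ?_
        exact Submodule.subset_span ⟨i, rfl⟩
      have hLx : Lmap F K c' (t + 1) (∑ i : Fin t, sc i.castSucc • v i.castSucc
          + sc (Fin.last t) • v (Fin.last t)) = sc (Fin.last t) • a := by
        rw [map_add, h3 _ hy, map_smul, zero_add, ha]
      rw [hLx]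
      have h5 : (sc (Fin.last t) • a) ^ q = sc (Fin.last t) • a ^ q := by
        simpa using smul_pow_cardF F K (sc (Fin.last t)) a 1
      rw [h5, mul_smul_comm]
      have h6 : a ^ (q - 1) * a = a ^ q := by
        rw [← pow_succ]
        congr 1
        have : 0 < q := Fintype.card_pos
        omega
      rw [h6, sub_self]

lemma trace_sum_frob (m : ℕ) (hm : Module.finrank F K = m) (x : K) :
    algebraMap F K (Algebra.trace F K x) = ∑ i : Fin m, x ^ (Fintype.card F) ^ (i : ℕ) := by
  classical
  set q := Fintype.card F with hqdef
  have hq : 1 < q := Fintype.one_lt_card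
  haveI : FiniteDimensional F K := Module.Finite.of_basis (Module.Basis.ofVectorSpace F K)
  rw [_root_.trace_eq_sum_automorphisms]
  -- the Frobenius algebra automorphism
  let fa : K →ₐ[F] K :=
    { toFun := fun z => z ^ q,
      map_one' := one_pow q,
      map_mul' := fun z w => mul_pow z w q,
      map_zero' := zero_pow Fintype.card_ne_zero,
      map_add' := fun z w => by simpa using add_pow_cardF F K z w 1,
      commutes' := fun a => by
        show (algebraMap F K a) ^ q = algebraMap F K a
        rw [← map_pow, hqdef, FiniteField.pow_card] }
  let φ : K ≃ₐ[F] K := AlgEquiv.ofBijective fa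
    (Finite.injective_iff_bijective.mp fa.toRingHom.injective)
  have hφ : ∀ z : K, φ z = z ^ q := fun z => rfl
  have hφpow : ∀ (i : ℕ) (z : K), (φ ^ i) z = z ^ q ^ i := by
    intro i
    induction i with
    | zero => intro z; simp
    | succ i ihi =>
      intro z
      rw [pow_succ', AlgEquiv.mul_apply, hφ, ihi, ← pow_mul, pow_succ, mul_comm (q ^ i) q]
  -- injectivity of i ↦ φ^i on Fin m
  have hpow_inj : ∀ d : ℕ, 0 < d → d < m → ¬(∀ z : K, z ^ q ^ d = z) := by
    intro d hd hdm hall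
    set P : K[X] := X ^ q ^ d - X with hP
    have hPne : P ≠ 0 := FiniteField.X_pow_card_pow_sub_X_ne_zero K (by omega) hq
    have hPdeg : P.natDegree = q ^ d :=
      FiniteField.X_pow_card_pow_sub_X_natDegree_eq K (by omega) hq
    have hroots : ∀ z ∈ (Finset.univ : Finset K), P.IsRoot z := by
      intro z _
      simp [hP, Polynomial.IsRoot, hall z]
    have := card_le_natDegree K hPne Finset.univ hroots
    rw [Finset.card_univ, hPdeg, Module.card_eq_pow_finrank (K := F) (V := K), hm] at this
    exact absurd ((Nat.pow_le_pow_iff_right hq).mp this) (by omega)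
  have hinj : Function.Injective (fun i : Fin m => φ ^ (i : ℕ)) := by
    intro i j hij
    have hij' : φ ^ (i : ℕ) = φ ^ (j : ℕ) := hij
    by_contra hne
    have hne' : (i : ℕ) ≠ (j : ℕ) := fun h => hne (Fin.ext h)
    rcases Nat.lt_or_ge (i : ℕ) (j : ℕ) with h | h
    · refine hpow_inj ((j : ℕ) - i) (by omega) (by have := j.isLt; omega) fun z => ?_
      refine (φ ^ (i : ℕ)).injective ?_
      rw [hφpow (i : ℕ) (z ^ q ^ ((j : ℕ) - i)), ← pow_mul, ← pow_add,
        show (j : ℕ) - i + i = j by omega, ← hφpow (j : ℕ) z, ← hij', hφpow]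
    · have h' : (j : ℕ) < i := by omega
      refine hpow_inj ((i : ℕ) - j) (by omega) (by have := i.isLt; omega) fun z => ?_
      refine (φ ^ (j : ℕ)).injective ?_
      rw [hφpow (j : ℕ) (z ^ q ^ ((i : ℕ) - j)), ← pow_mul, ← pow_add,
        show (i : ℕ) - j + j = i by omega, ← hφpow (i : ℕ) z, hij', hφpow]
  have hbij : Function.Bijective (fun i : Fin m => φ ^ (i : ℕ)) := by
    rw [Fintype.bijective_iff_injective_and_card]
    refine ⟨hinj, ?_⟩
    rw [Fintype.card_fin, ← Nat.card_eq_fintype_card, IsGalois.card_aut_eq_finrank, hm]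
  rw [← Fintype.sum_bijective _ hbij (fun i : Fin m => x ^ q ^ (i : ℕ))
    (fun σ => σ x) (fun i => (hφpow i x).symm)]

end MooreAux

variable (F K : Type*) [Field F] [Fintype F] [Field K] [Fintype K] [Algebra F K]

/-- The rank of a vector `β ∈ K^n`: the `F`-dimension of the span of its coordinates. -/
noncomputable def vecRank (n : ℕ) (β : Fin n → K) : ℕ :=
  Module.finrank F (Submodule.span F (Set.range β))

/-- The Euclidean (dot product) bilinear form on `K^n`. -/
noncomputable def dotBilin (n : ℕ) : LinearMap.BilinForm K (Fin n → K) :=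
  LinearMap.mk₂ K (fun x y => dotProduct x y)
    (by intros; simp [add_dotProduct])
    (by intros; simp [smul_dotProduct])
    (by intros; simp [dotProduct_add])
    (by intros; simp [dotProduct_smul])

/-- The Euclidean dual code. -/
noncomputable def euclDual (n : ℕ) (C : Submodule K (Fin n → K)) : Submodule K (Fin n → K) :=
  (dotBilin K n).orthogonal C

open MooreAux in
/-- if `G = {g_1,…,g_m}` is a self-dual basis of `F_{q^m}/F_q` and `C` is the
Gabidulin code of length `m` generated by the `k×m` Moore matrix `G_k` (entries `g_j^{q^{i-1}}`,
`1 ≤ i ≤ k ≤ m`), then `G_k G_kᵀ = I_k`, and `C` is an LCD MRD code with parameters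
`[m, k, m-k+1]`. -/
theorem selfDualBasis_moore_code_lcd_mrd (q m k : ℕ) (hq : Fintype.card F = q)
    (hk : 0 < k) (hkm : k ≤ m)
    (b : Module.Basis (Fin m) F K)
    (hsd : ∀ i j : Fin m, Algebra.trace F K (b i * b j) = if i = j then 1 else 0)
    (Gk : Matrix (Fin k) (Fin m) K)
    (hG : Gk = Matrix.of (fun (i : Fin k) (j : Fin m) => b j ^ q ^ (i : ℕ)))
    (C : Submodule K (Fin m → K))
    (hC : C = Submodule.span K (Set.range (fun i : Fin k => Gk i))) :
    Gk * Gk.transpose = 1 ∧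
    C ⊓ euclDual K m C = ⊥ ∧
    Module.finrank K C = k ∧
    IsLeast {r : ℕ | ∃ β ∈ C, β ≠ 0 ∧ vecRank F K m β = r} (m - k + 1) := by
  classical
  subst hq
  set q := Fintype.card F with hqdef
  haveI : FiniteDimensional F K := Module.Finite.of_basis b
  have hm : Module.finrank F K = m := by
    rw [Module.finrank_eq_card_basis b, Fintype.card_fin]
  have hq1 : 1 < q := Fintype.one_lt_card
  -- Part 1 : Gk * Gkᵀ = 1
  have hGG : Gk * Gk.transpose = 1 := by
    set M : Matrix (Fin m) (Fin m) K := Matrix.of fun i j => b j ^ q ^ (i : ℕ) with hM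
    have hMtM : M.transpose * M = 1 := by
      ext j l
      rw [Matrix.mul_apply]
      have hterm : ∀ i : Fin m, M.transpose j i * M i l = (b j * b l) ^ q ^ (i : ℕ) := by
        intro i; simp [hM, mul_pow]
      simp_rw [hterm]
      rw [← trace_sum_frob F K m hm (b j * b l), hsd j l]
      rcases eq_or_ne j l with rfl | hne
      · simp [Matrix.one_apply]
      · simp [Matrix.one_apply, hne]
    have hMMt : M * M.transpose = 1 := mul_eq_one_comm.mp hMtM
    rw [hG]
    ext i i'
    have h1 := Matrix.ext_iff.mpr hMMt (Fin.castLE hkm i) (Fin.castLE hkm i')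
    rw [Matrix.mul_apply] at h1 ⊢
    simp only [Matrix.transpose_apply, Matrix.of_apply, hM, Fin.coe_castLE] at h1 ⊢
    rw [h1, Matrix.one_apply, Matrix.one_apply]
    simp [Fin.castLE_inj]
  -- the dot product of a row with a codeword
  have hdot : ∀ (c : Fin k → K) (i : Fin k),
      dotProduct (Gk i) (∑ l, c l • Gk l) = c i := by
    intro c i
    rw [dotProduct]
    simp_rw [Finset.sum_apply, Pi.smul_apply, smul_eq_mul, Finset.mul_sum]
    rw [Finset.sum_comm]
    have hterm : ∀ l, (∑ j, Gk i j * (c l * Gk l j)) = c l * (Gk * Gk.transpose) i l := by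
      intro l
      rw [Matrix.mul_apply, Finset.mul_sum]
      exact Finset.sum_congr rfl fun j _ => by rw [Matrix.transpose_apply]; ring
    simp_rw [hterm, hGG]
    simp [Matrix.one_apply]
  -- LCD
  have hLCD : C ⊓ euclDual K m C = ⊥ := by
    rw [Submodule.eq_bot_iff]
    intro x hx
    obtain ⟨hxC, hxD⟩ := Submodule.mem_inf.mp hx
    rw [hC, Submodule.mem_span_range_iff_exists_fun] at hxC
    obtain ⟨c, rfl⟩ := hxC
    have hc0 : ∀ i, c i = 0 := by
      intro i
      have hGi : Gk i ∈ C := hC ▸ Submodule.subset_span ⟨i, rfl⟩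
      have h0 : dotProduct (Gk i) (∑ l, c l • Gk l) = 0 := hxD (Gk i) hGi
      rw [hdot c i] at h0
      exact h0
    exact Finset.sum_eq_zero fun l _ => by rw [hc0, zero_smul]
  -- dimension
  have hfr : Module.finrank K C = k := by
    have hli : LinearIndependent K (fun i : Fin k => Gk i) := by
      rw [Fintype.linearIndependent_iff]
      intro c hcsum i
      have h0 := hdot c i
      rw [hcsum, dotProduct_zero] at h0
      exact h0.symm
    rw [hC, finrank_span_eq_card hli, Fintype.card_fin]
  -- codewords are values of linearized polynomials
  have hcode : ∀ (c : ℕ → K) (j : Fin m),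
      (∑ i : Fin k, c (i : ℕ) • Gk i) j = Lmap F K c k (b j) := by
    intro c j
    rw [Finset.sum_apply]
    simp_rw [Pi.smul_apply, smul_eq_mul, hG, Matrix.of_apply]
    rw [Lmap_apply, ← Fin.sum_univ_eq_sum_range (fun n => c n * b j ^ q ^ n) k]
  have hrank : ∀ L : K →ₗ[F] K, vecRank F K m (fun j => L (b j)) =
      Module.finrank F (LinearMap.range L) := by
    intro L
    rw [vecRank]
    have hcomp : Set.range (fun j => L (b j)) = L '' Set.range b := by
      rw [← Set.range_comp]
      rfl
    rw [hcomp, Submodule.span_image, b.span_eq, Submodule.map_top]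
  refine ⟨hGG, hLCD, hfr, ?_, ?_⟩
  · -- m - k + 1 is attained
    have hk1 : k - 1 + 1 = k := by omega
    set e : Fin (k - 1) → Fin m := Fin.castLE (by omega) with he
    obtain ⟨c, hc1, hc2, hc3⟩ := exists_subspace_poly F K (k - 1) (fun i => b (e i))
    rw [hk1] at hc3
    set L := Lmap F K c k with hL
    have hker_le : Module.finrank F (LinearMap.ker L) ≤ k - 1 :=
      finrank_ker_Lmap_le F K c k (k - 1) (by omega) (by rw [hc1]; exact one_ne_zero)
    have hspan_le : Submodule.span F (Set.range fun i => b (e i)) ≤ LinearMap.ker L :=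
      fun x hx => LinearMap.mem_ker.mpr (hc3 x hx)
    have hV : Module.finrank F (Submodule.span F (Set.range fun i => b (e i))) = k - 1 := by
      have hli2 : LinearIndependent F (fun i => b (e i)) :=
        b.linearIndependent.comp e (Fin.castLE_injective _)
      rw [finrank_span_eq_card hli2, Fintype.card_fin]
    have hker_ge : k - 1 ≤ Module.finrank F (LinearMap.ker L) := by
      rw [← hV]
      exact Submodule.finrank_mono hspan_le
    have hrn := LinearMap.finrank_range_add_finrank_ker L
    rw [hm] at hrn
    have hrange : Module.finrank F (LinearMap.range L) = m - k + 1 := by omega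
    refine ⟨fun j => L (b j), ?_, ?_, ?_⟩
    · rw [hC, Submodule.mem_span_range_iff_exists_fun]
      exact ⟨fun i => c (i : ℕ), funext fun j => hcode c j⟩
    · intro hβ0
      have hL0 : L = 0 := b.ext fun i => by simpa using congrFun hβ0 i
      rw [hL0, LinearMap.range_zero, finrank_bot] at hrange
      omega
    · rw [hrank L, hrange]
  · -- lower bound
    rintro r ⟨β, hβC, hβne, rfl⟩
    rw [hC, Submodule.mem_span_range_iff_exists_fun] at hβC
    obtain ⟨c, rfl⟩ := hβC
    set cc : ℕ → K := fun n => if h : n < k then c ⟨n, h⟩ else 0 with hcc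
    have hsame : (∑ i, c i • Gk i) = ∑ i : Fin k, cc (i : ℕ) • Gk i := by
      refine Finset.sum_congr rfl fun i _ => ?_
      have hcci : cc (i : ℕ) = c i := by rw [hcc]; simp
      rw [hcci]
    have hfun : (∑ i, c i • Gk i) = fun j => Lmap F K cc k (b j) := by
      funext j
      rw [hsame]
      exact hcode cc j
    rw [hfun] at hβne ⊢
    have hex : ∃ j0, j0 < k ∧ cc j0 ≠ 0 := by
      by_contra hno
      push_neg at hno
      apply hβne
      funext j
      rw [Lmap_apply]
      exact Finset.sum_eq_zero fun n hn => by
        rw [hno n (Finset.mem_range.mp hn), zero_mul]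
    obtain ⟨j0, hj0k, hj0⟩ := hex
    have hker := finrank_ker_Lmap_le F K cc k j0 hj0k hj0
    have hrn := LinearMap.finrank_range_add_finrank_ker (Lmap F K cc k)
    rw [hm] at hrn
    rw [hrank]
    omega
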